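/- arXiv:2410.00478 — 5 statements merged into one kernel-verified Lean document; each statement's English description precedes it below -/
import Mathlib

section
/- For the nonlinearity F(u, u_t, u_x) = -(u_x)² u_t, the function K_F(z) = (i/2π) ∫₀^{2π} F(cos θ, -cosh z sin θ, sinh z sin θ) e^{-iθ} dθ equals (3/8) cosh z sinh² z; in particular Re K_F vanishes only at z = 0 and is strictly positive for z ≠ 0. -/
lemma h1 : (∫ θ in (0:ℝ)..(2*Real.pi), Real.sin θ ^ 3 * Real.cos θ) = 0 := by
  have := integral_sin_pow_mul_cos_pow_odd (a := 0) (b := 2*Real.pi) 3 0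
  simpa using this

lemma h2 : (∫ θ in (0:ℝ)..(2*Real.pi), Real.sin θ ^ 4 = (3/4) * Real.pi) := by
  have := integral_sin_pow (a := 0) (b := 2*Real.pi) 2
  simp at this
  rw [show (4:ℕ) = 2 + 2 from rfl, this]
  ring

lemma hint :
    (∫ θ in (0:ℝ)..(2 * Real.pi),
        ((Real.sin θ ^ 3 * Real.cos θ : ℝ) : ℂ) - Complex.I * ((Real.sin θ ^ 4 : ℝ) : ℂ))
      = - Complex.I * ((3/4) * Real.pi : ℝ) := by
  rw [intervalIntegral.integral_sub, intervalIntegral.integral_const_mul]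
  · rw [intervalIntegral.integral_ofReal, intervalIntegral.integral_ofReal, h1, h2]
    push_cast; ring
  · exact (Complex.continuous_ofReal.comp (by fun_prop)).intervalIntegrable _ _
  · exact (continuous_const.mul (Complex.continuous_ofReal.comp (by fun_prop))).intervalIntegrable _ _

theorem stmt_6 (z : ℝ) :
    (Complex.I / (2 * Real.pi)) *
      ∫ θ in (0:ℝ)..(2 * Real.pi),
        ((-((Real.sinh z * Real.sin θ) ^ 2 * (-(Real.cosh z) * Real.sin θ)) : ℝ) : ℂ) *
          Complex.exp (-(Complex.I * (θ : ℂ)))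
      = (((3 / 8) * Real.cosh z * Real.sinh z ^ 2 : ℝ) : ℂ) ∧
    (z = 0 → (3 / 8) * Real.cosh z * Real.sinh z ^ 2 = 0) ∧
    (z ≠ 0 → 0 < (3 / 8) * Real.cosh z * Real.sinh z ^ 2) := by
  refine ⟨?_, ?_, ?_⟩
  · have key : ∀ θ : ℝ,
        ((-((Real.sinh z * Real.sin θ) ^ 2 * (-(Real.cosh z) * Real.sin θ)) : ℝ) : ℂ) *
          Complex.exp (-(Complex.I * (θ : ℂ)))
        = ((Real.cosh z * Real.sinh z ^ 2 : ℝ) : ℂ) *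
            (((Real.sin θ ^ 3 * Real.cos θ : ℝ) : ℂ) - Complex.I * ((Real.sin θ ^ 4 : ℝ) : ℂ)) := by
      intro θ
      have : Complex.exp (-(Complex.I * (θ : ℂ))) = Real.cos θ - Complex.I * Real.sin θ := by
        rw [show -(Complex.I * (θ : ℂ)) = (-θ : ℝ) * Complex.I by push_cast; ring,
          Complex.exp_mul_I]
        push_cast
        simp [Real.cos_neg, Real.sin_neg]
        ring
      rw [this]
      push_cast
      ring
    simp_rw [key]
    rw [intervalIntegral.integral_const_mul, hint]
    have hπ : (Real.pi : ℂ) ≠ 0 := by exact_mod_cast Real.pi_ne_zero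
    push_cast
    field_simp
    ring_nf
    rw [Complex.I_sq]
    ring
  · rintro rfl; simp
  · intro hz
    have h1 : Real.sinh z ≠ 0 := fun h => hz (Real.sinh_eq_zero.mp h)
    have := Real.cosh_pos z
    positivity
end

section
/- Let F(u, u_t, u_x) = (γ₁u² + γ₂u_t² + γ₃u_x² + γ₄u_tu_x)u + (γ₅u² + γ₆u_t² + γ₇u_x²)u_t + (γ₈u² + γ₉u_t² + γ₁₀u_x²)u_x with real constants γ₁,…,γ₁₀, and define K_F(z) = (i/2π)∫₀^{2π} F(cosθ, -cosh z sinθ, sinh z sinθ)e^{-iθ}dθ. Then Re K_F(z) = -(cosh z/8)(γ₅ + 3γ₆cosh²z + 3γ₇sinh²z) + (sinh z/8)(γ₈ + 3γ₉cosh²z + 3γ₁₀sinh²z). -/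
/-!
Writing `e^{-iθ} = cos θ - i sin θ`, the real part of `(i/2π) ∫ F e^{-iθ}` is `(1/2π) ∫ F sin θ`.
Every monomial of `F(cos θ, -cosh z sin θ, sinh z sin θ) sin θ` has degree four in `(sin θ, cos θ)`,
and over a full period only `sin² cos² ↦ π/4` and `sin⁴ ↦ 3π/4` survive; these are exactly the
terms carried by `u_t` and `u_x` with coefficients `γ₅, …, γ₁₀`.
-/

open Real intervalIntegral

theorem re_I_div_mul_integral_ofReal_mul_exp_neg_I {f : ℝ → ℝ} {a b : ℝ}
    (hf : IntervalIntegrable f MeasureTheory.volume a b) (c : ℝ) :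
    ((Complex.I / c) * ∫ θ in a..b, (f θ : ℂ) * Complex.exp (-(Complex.I * θ))).re
      = (∫ θ in a..b, f θ * sin θ) / c := by
  have hint : IntervalIntegrable (fun θ : ℝ => (f θ : ℂ) * Complex.exp (-(Complex.I * θ)))
      MeasureTheory.volume a b :=
    IntervalIntegrable.mul_continuousOn ⟨hf.1.ofReal, hf.2.ofReal⟩ (by fun_prop)
  have him : (∫ θ in a..b, (f θ : ℂ) * Complex.exp (-(Complex.I * θ))).im
      = -∫ θ in a..b, f θ * sin θ := by
    rw [← RCLike.im_to_complex, ← intervalIntegral_im hint, ← intervalIntegral.integral_neg]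
    congr 1 with θ
    simp [Complex.exp_im]
  rw [div_mul_eq_mul_div, Complex.div_ofReal_re, Complex.I_mul_re, him, neg_neg]

theorem integral_sin_mul_cos_pow_three_zero_two_pi :
    ∫ θ in (0:ℝ)..2 * π, sin θ * cos θ ^ 3 = 0 := by
  simpa using integral_sin_pow_odd_mul_cos_pow (a := 0) (b := 2 * π) 0 3

theorem integral_sin_pow_three_mul_cos_zero_two_pi :
    ∫ θ in (0:ℝ)..2 * π, sin θ ^ 3 * cos θ = 0 := by
  simpa using integral_sin_pow_mul_cos_pow_odd (a := 0) (b := 2 * π) 3 0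

theorem integral_sin_sq_mul_cos_sq_zero_two_pi :
    ∫ θ in (0:ℝ)..2 * π, sin θ ^ 2 * cos θ ^ 2 = π / 4 := by
  have hsin : sin (4 * (2 * π)) = 0 := by
    rw [show (4:ℝ) * (2 * π) = (8:ℕ) * π by push_cast; ring, sin_nat_mul_pi]
  rw [integral_sin_sq_mul_cos_sq, hsin]
  simp only [mul_zero, sin_zero, sub_zero, zero_div]
  ring

theorem integral_sin_pow_four_zero_two_pi :
    ∫ θ in (0:ℝ)..2 * π, sin θ ^ 4 = 3 * π / 4 := by
  rw [integral_sin_pow (n := 2)]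
  norm_num
  ring

theorem integral_quartic_sin_cos_zero_two_pi (p q r s : ℝ) :
    ∫ θ in (0:ℝ)..2 * π, (p * (sin θ * cos θ ^ 3) + q * (sin θ ^ 3 * cos θ)
        + r * (sin θ ^ 2 * cos θ ^ 2) + s * sin θ ^ 4)
      = (r + 3 * s) * π / 4 := by
  have hi : ∀ g : ℝ → ℝ, Continuous g → IntervalIntegrable g MeasureTheory.volume 0 (2 * π) :=
    fun g hg => hg.intervalIntegrable _ _
  rw [integral_add (hi _ (by fun_prop)) (hi _ (by fun_prop)),
    integral_add (hi _ (by fun_prop)) (hi _ (by fun_prop)),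
    integral_add (hi _ (by fun_prop)) (hi _ (by fun_prop)),
    integral_const_mul, integral_const_mul, integral_const_mul, integral_const_mul,
    integral_sin_mul_cos_pow_three_zero_two_pi, integral_sin_pow_three_mul_cos_zero_two_pi,
    integral_sin_sq_mul_cos_sq_zero_two_pi, integral_sin_pow_four_zero_two_pi]
  ring

theorem stmt_7 (γ₁ γ₂ γ₃ γ₄ γ₅ γ₆ γ₇ γ₈ γ₉ γ₁₀ : ℝ) (z : ℝ) :
    ((Complex.I / (2 * Real.pi)) *
      ∫ θ in (0:ℝ)..(2 * Real.pi),
        (((γ₁ * Real.cos θ ^ 2 + γ₂ * (-(Real.cosh z) * Real.sin θ) ^ 2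
            + γ₃ * (Real.sinh z * Real.sin θ) ^ 2
            + γ₄ * (-(Real.cosh z) * Real.sin θ) * (Real.sinh z * Real.sin θ)) * Real.cos θ
          + (γ₅ * Real.cos θ ^ 2 + γ₆ * (-(Real.cosh z) * Real.sin θ) ^ 2
            + γ₇ * (Real.sinh z * Real.sin θ) ^ 2) * (-(Real.cosh z) * Real.sin θ)
          + (γ₈ * Real.cos θ ^ 2 + γ₉ * (-(Real.cosh z) * Real.sin θ) ^ 2
            + γ₁₀ * (Real.sinh z * Real.sin θ) ^ 2) * (Real.sinh z * Real.sin θ) : ℝ) : ℂ) *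
          Complex.exp (-(Complex.I * (θ : ℂ)))).re
    = -(Real.cosh z / 8) * (γ₅ + 3 * γ₆ * Real.cosh z ^ 2 + 3 * γ₇ * Real.sinh z ^ 2)
      + (Real.sinh z / 8) * (γ₈ + 3 * γ₉ * Real.cosh z ^ 2 + 3 * γ₁₀ * Real.sinh z ^ 2) := by
  have hre := re_I_div_mul_integral_ofReal_mul_exp_neg_I
    (f := fun θ => (γ₁ * cos θ ^ 2 + γ₂ * (-cosh z * sin θ) ^ 2 + γ₃ * (sinh z * sin θ) ^ 2
          + γ₄ * (-cosh z * sin θ) * (sinh z * sin θ)) * cos θ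
        + (γ₅ * cos θ ^ 2 + γ₆ * (-cosh z * sin θ) ^ 2 + γ₇ * (sinh z * sin θ) ^ 2)
          * (-cosh z * sin θ)
        + (γ₈ * cos θ ^ 2 + γ₉ * (-cosh z * sin θ) ^ 2 + γ₁₀ * (sinh z * sin θ) ^ 2)
          * (sinh z * sin θ))
    (a := 0) (b := 2 * π) (Continuous.intervalIntegrable (by fun_prop) _ _) (2 * π)
  rw [Complex.ofReal_mul, Complex.ofReal_ofNat] at hre
  rw [hre, integral_congr (g := fun θ =>
      γ₁ * (sin θ * cos θ ^ 3)
        + (γ₂ * cosh z ^ 2 + γ₃ * sinh z ^ 2 - γ₄ * cosh z * sinh z) * (sin θ ^ 3 * cos θ)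
        + (sinh z * γ₈ - cosh z * γ₅) * (sin θ ^ 2 * cos θ ^ 2)
        + (sinh z * (γ₉ * cosh z ^ 2 + γ₁₀ * sinh z ^ 2)
            - cosh z * (γ₆ * cosh z ^ 2 + γ₇ * sinh z ^ 2)) * sin θ ^ 4)
      (fun θ _ => by ring),
    integral_quartic_sin_cos_zero_two_pi]
  field_simp
  ring
end

section
/- Let p be a real polynomial of degree ≤ 3, nonnegative on (-1,1), with a unique zero y₀ ∈ (-1,1), p strictly positive on (-1,1)\{y₀}, and p'(-1) ≠ 0, p'(1) ≠ 0. Then there exist δ > 0 and c₀, c_* > 0 such that p(y) ≥ c_*(1+y) for y ∈ (-1, y₀-δ], p(y) ≥ (c₀/2)(y-y₀)² for y ∈ (y₀-δ, y₀+δ), and p(y) ≥ c_*(1-y) for y ∈ [y₀+δ, 1). -/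
set_option maxHeartbeats 1600000 in
theorem stmt_11 (p : Polynomial ℝ) (hdeg : p.natDegree ≤ 3)
    (hnonneg : ∀ y ∈ Set.Ioo (-1:ℝ) 1, 0 ≤ p.eval y)
    (y₀ : ℝ) (hy₀ : y₀ ∈ Set.Ioo (-1:ℝ) 1) (hzero : p.eval y₀ = 0)
    (hpos : ∀ y ∈ Set.Ioo (-1:ℝ) 1, y ≠ y₀ → 0 < p.eval y)
    (c₀ : ℝ) (hc₀ : 0 < c₀)
    (hlim : Filter.Tendsto (fun y => p.eval y / (y - y₀) ^ 2)
      (nhdsWithin y₀ {y₀}ᶜ) (nhds c₀))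
    (hd1 : (Polynomial.derivative p).eval (-1) ≠ 0)
    (hd2 : (Polynomial.derivative p).eval 1 ≠ 0) :
    ∃ δ > 0, ∃ cs > 0,
      (∀ y ∈ Set.Ioc (-1:ℝ) (y₀ - δ), cs * (1 + y) ≤ p.eval y) ∧
      (∀ y ∈ Set.Ioo (y₀ - δ) (y₀ + δ), (c₀ / 2) * (y - y₀) ^ 2 ≤ p.eval y) ∧
      (∀ y ∈ Set.Ico (y₀ + δ) 1, cs * (1 - y) ≤ p.eval y) := by
  obtain ⟨hy1, hy2⟩ := hy₀
  -- Step 1: derivative of p vanishes at y₀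
  have hslope : Filter.Tendsto (fun y => p.eval y / (y - y₀)) (nhdsWithin y₀ {y₀}ᶜ)
      (nhds ((Polynomial.derivative p).eval y₀)) := by
    have h := p.hasDerivAt y₀
    rw [hasDerivAt_iff_tendsto_slope] at h
    refine Filter.Tendsto.congr (fun y => ?_) h
    simp [slope_def_field, hzero]
  have hzerolim : Filter.Tendsto (fun y => p.eval y / (y - y₀)) (nhdsWithin y₀ {y₀}ᶜ)
      (nhds 0) := by
    have hsub : Filter.Tendsto (fun y : ℝ => y - y₀) (nhdsWithin y₀ {y₀}ᶜ) (nhds 0) := by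
      have h : Filter.Tendsto (fun y : ℝ => y - y₀) (nhds y₀) (nhds (y₀ - y₀)) :=
        (continuous_id.sub continuous_const).tendsto y₀
      simpa using h.mono_left nhdsWithin_le_nhds
    have hmul := hlim.mul hsub
    rw [mul_zero] at hmul
    refine hmul.congr' ?_
    filter_upwards [self_mem_nhdsWithin] with y hy
    have hy' : y - y₀ ≠ 0 := sub_ne_zero.2 (Set.mem_compl_singleton_iff.1 hy)
    field_simp
  have hderiv : (Polynomial.derivative p).eval y₀ = 0 :=
    tendsto_nhds_unique hslope hzerolim
  -- Step 2: factor p = (X - y₀)^2 * q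
  obtain ⟨r, hr⟩ := (Polynomial.dvd_iff_isRoot (p := p) (a := y₀)).2 hzero
  have hr0 : r.eval y₀ = 0 := by
    have h : (Polynomial.derivative p).eval y₀ = r.eval y₀ := by
      rw [hr, Polynomial.derivative_mul]; simp
    rw [← h, hderiv]
  obtain ⟨q, hq⟩ := (Polynomial.dvd_iff_isRoot (p := r) (a := y₀)).2 hr0
  have hpq : p = (Polynomial.X - Polynomial.C y₀) ^ 2 * q := by rw [hr, hq]; ring
  have peval : ∀ y, p.eval y = (y - y₀) ^ 2 * q.eval y := by
    intro y; rw [hpq]; simp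
  -- Step 3: q(y₀) = c₀
  have hqc : q.eval y₀ = c₀ := by
    have h1 : Filter.Tendsto (fun y => q.eval y) (nhdsWithin y₀ {y₀}ᶜ) (nhds (q.eval y₀)) :=
      (q.continuous.tendsto y₀).mono_left nhdsWithin_le_nhds
    have h2 : Filter.Tendsto (fun y => q.eval y) (nhdsWithin y₀ {y₀}ᶜ) (nhds c₀) := by
      refine hlim.congr' ?_
      filter_upwards [self_mem_nhdsWithin] with y hy
      have hy' : (y - y₀) ^ 2 ≠ 0 := pow_ne_zero 2 (sub_ne_zero.2 (Set.mem_compl_singleton_iff.1 hy))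
      rw [peval y, mul_comm, mul_div_assoc, div_self hy', mul_one]
    exact tendsto_nhds_unique h1 h2
  -- q nonnegative on (-1,1)
  have hqnn : ∀ y ∈ Set.Ioo (-1:ℝ) 1, 0 ≤ q.eval y := by
    intro y hy
    rcases eq_or_ne y y₀ with h | h
    · rw [h, hqc]; exact hc₀.le
    · have hp := hpos y hy h
      rw [peval y] at hp
      nlinarith [sq_nonneg (y - y₀)]
  -- boundary nonnegativity
  have hcl1 : (-1:ℝ) ∈ closure (Set.Ioo (-1:ℝ) 1) := by
    rw [closure_Ioo (by norm_num : (-1:ℝ) ≠ 1)]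
    constructor <;> norm_num
  have hcl2 : (1:ℝ) ∈ closure (Set.Ioo (-1:ℝ) 1) := by
    rw [closure_Ioo (by norm_num : (-1:ℝ) ≠ 1)]
    constructor <;> norm_num
  haveI hne1 := mem_closure_iff_nhdsWithin_neBot.1 hcl1
  haveI hne2 := mem_closure_iff_nhdsWithin_neBot.1 hcl2
  have hqm1 : 0 ≤ q.eval (-1) :=
    ge_of_tendsto ((q.continuous.tendsto (-1)).mono_left nhdsWithin_le_nhds)
      (eventually_nhdsWithin_of_forall hqnn)
  have hqp1 : 0 ≤ q.eval 1 :=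
    ge_of_tendsto ((q.continuous.tendsto 1).mono_left nhdsWithin_le_nhds)
      (eventually_nhdsWithin_of_forall hqnn)
  -- q has degree ≤ 1
  have hpne : p ≠ 0 := by
    intro h
    have hm : (y₀ - 1) / 2 ∈ Set.Ioo (-1:ℝ) 1 := ⟨by linarith, by linarith⟩
    have := hpos _ hm (by intro he; rw [← he] at *; linarith [he ▸ (le_refl ((y₀-1)/2))])
    rw [h] at this; simp at this
  have hqne : q ≠ 0 := by
    intro h; exact hpne (by rw [hpq, h, mul_zero])
  have hdq : q.natDegree ≤ 1 := by
    have hX : ((Polynomial.X - Polynomial.C y₀ : Polynomial ℝ) ^ 2).natDegree = 2 := by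
      rw [Polynomial.natDegree_pow, Polynomial.natDegree_X_sub_C]
    have hmul := Polynomial.natDegree_mul
      (pow_ne_zero 2 (Polynomial.X_sub_C_ne_zero y₀)) hqne
    rw [hpq, hmul, hX] at hdeg
    omega
  obtain ⟨a, b, qeval⟩ : ∃ a b : ℝ, ∀ y, q.eval y = a * y + b :=
    ⟨q.coeff 1, q.coeff 0, fun y => by
      conv_lhs => rw [Polynomial.eq_X_add_C_of_natDegree_le_one hdq]
      simp⟩
  have hab1 : 0 ≤ b - a := by have h := hqm1; rw [qeval] at h; linarith
  have hab2 : 0 ≤ a + b := by have h := hqp1; rw [qeval] at h; linarith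
  have hc : a * y₀ + b = c₀ := by have h := hqc; rw [qeval] at h; linarith
  obtain ⟨δ, hδpos, hδabs, hδ2, hδ3⟩ :
      ∃ δ : ℝ, 0 < δ ∧ |a| * δ ≤ c₀ / 2 ∧ δ ≤ (y₀ + 1) / 2 ∧ δ ≤ (1 - y₀) / 2 := by
    refine ⟨min (c₀ / (2 * (|a| + 1))) (min ((y₀ + 1) / 2) ((1 - y₀) / 2)),
      lt_min (by positivity) (lt_min (by linarith) (by linarith)), ?_,
      le_trans (min_le_right _ _) (min_le_left _ _),
      le_trans (min_le_right _ _) (min_le_right _ _)⟩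
    have key : |a| * (c₀ / (2 * (|a| + 1))) ≤ c₀ / 2 := by
      rw [← mul_div_assoc, div_le_div_iff₀ (by positivity) (by norm_num)]
      nlinarith [abs_nonneg a, hc₀.le]
    exact le_trans (mul_le_mul_of_nonneg_left (min_le_left _ _) (abs_nonneg a)) key
  refine ⟨δ, hδpos, δ ^ 2 * (c₀ / 2),
    mul_pos (pow_pos hδpos 2) (by linarith), ?_, ?_, ?_⟩
  · rintro y ⟨hy3, hy4⟩
    have hid : (a * y + b) * (1 + y₀) = (b - a) * (y₀ - y) + c₀ * (1 + y) := by
      rw [← hc]; ring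
    have hyy : 0 ≤ y₀ - y := by linarith
    have h0 : 0 ≤ a * y + b := by
      nlinarith [mul_nonneg hab1 hyy, mul_pos hc₀ (show (0:ℝ) < 1 + y by linarith)]
    have h1 : c₀ * (1 + y) ≤ 2 * (a * y + b) := by
      nlinarith [mul_nonneg hab1 hyy, mul_nonneg h0 (show (0:ℝ) ≤ 1 - y₀ by linarith)]
    have h2 : δ ^ 2 ≤ (y - y₀) ^ 2 := by
      nlinarith [mul_le_mul (show δ ≤ y₀ - y by linarith) (show δ ≤ y₀ - y by linarith)
        hδpos.le hyy]
    rw [peval y, qeval y]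
    nlinarith [mul_le_mul_of_nonneg_right h2 h0,
      mul_le_mul_of_nonneg_left h1 (sq_nonneg δ)]
  · rintro y ⟨hy3, hy4⟩
    have habs : |a| * |y - y₀| ≤ c₀ / 2 := by
      have h1 : |y - y₀| ≤ δ := abs_le.2 ⟨by linarith, by linarith⟩
      exact le_trans (mul_le_mul_of_nonneg_left h1 (abs_nonneg a)) hδabs
    have hlow : -(c₀ / 2) ≤ a * (y - y₀) := by
      have h := neg_abs_le (a * (y - y₀))
      rw [abs_mul] at h
      linarith
    have hrepr : a * y + b = c₀ + a * (y - y₀) := by rw [← hc]; ring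
    have hqlb : c₀ / 2 ≤ a * y + b := by rw [hrepr]; linarith
    rw [peval y, qeval y]
    nlinarith [mul_le_mul_of_nonneg_left hqlb (sq_nonneg (y - y₀))]
  · rintro y ⟨hy3, hy4⟩
    have hid : (a * y + b) * (1 - y₀) = (a + b) * (y - y₀) + c₀ * (1 - y) := by
      rw [← hc]; ring
    have hyy : 0 ≤ y - y₀ := by linarith
    have h0 : 0 ≤ a * y + b := by
      nlinarith [mul_nonneg hab2 hyy, mul_pos hc₀ (show (0:ℝ) < 1 - y by linarith)]
    have h1 : c₀ * (1 - y) ≤ 2 * (a * y + b) := by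
      nlinarith [mul_nonneg hab2 hyy, mul_nonneg h0 (show (0:ℝ) ≤ 1 + y₀ by linarith)]
    have h2 : δ ^ 2 ≤ (y - y₀) ^ 2 := by
      nlinarith [mul_le_mul (show δ ≤ y - y₀ by linarith) (show δ ≤ y - y₀ by linarith)
        hδpos.le hyy]
    rw [peval y, qeval y]
    nlinarith [mul_le_mul_of_nonneg_right h2 h0,
      mul_le_mul_of_nonneg_left h1 (sq_nonneg δ)]
end

section
/- For every real number t ≥ 0 and every real p ≥ 2, the integral I¹_p(t) = ∫₀² (1/(1 + η log(t+2)))^{p/2} dη satisfies: if p = 2 then I¹_p(t) ≤ C (log(2+t))^{-1} log(1 + log(t+2)), and if p > 2 then I¹_p(t) ≤ C (log(2+t))^{-1}, for a constant C depending only on p. -/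
/-!
With `L = log (t + 2) > 0`, the substitution `x = 1 + η L` turns the integral into
`L⁻¹ ∫₁^{1+2L} x^{-p/2} dx`. For `p = 2` this equals `log (1 + 2L) / L ≤ 2 log (1 + L) / L`,
since `1 + 2L ≤ (1 + L)²`; for `p > 2` it is at most `L⁻¹ ∫₁^∞ x^{-p/2} dx = 2 / ((p - 2) L)`.
-/

open Real Set intervalIntegral

lemma integral_comp_one_add_mul (f : ℝ → ℝ) {L : ℝ} (hL : L ≠ 0) (b : ℝ) :
    ∫ η in (0:ℝ)..b, f (1 + η * L) = L⁻¹ * ∫ x in (1:ℝ)..1 + b * L, f x := by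
  simp_rw [mul_comm _ L]
  simpa using integral_comp_add_mul f hL 1 (a := 0) (b := b)

lemma integral_one_div_one_add_mul {L : ℝ} (hL : 0 < L) {b : ℝ} (hb : 0 ≤ b) :
    ∫ η in (0:ℝ)..b, 1 / (1 + η * L) = log (1 + b * L) / L := by
  rw [integral_comp_one_add_mul (fun x => 1 / x) hL.ne',
    integral_one_div_of_pos one_pos (by positivity), div_one, inv_mul_eq_div]

lemma integral_one_div_one_add_mul_rpow {L : ℝ} (hL : 0 < L) {b : ℝ} (hb : 0 ≤ b) {q : ℝ}
    (hq : q ≠ 1) :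
    ∫ η in (0:ℝ)..b, (1 / (1 + η * L)) ^ q = (1 - (1 + b * L) ^ (1 - q)) / ((q - 1) * L) := by
  have h1 : (1:ℝ) ≤ 1 + b * L := by nlinarith
  have hcongr : EqOn (fun x : ℝ => (1 / x) ^ q) (fun x => x ^ (-q)) (uIcc 1 (1 + b * L)) := by
    intro x hx
    rw [uIcc_of_le h1] at hx
    simp [one_div, inv_rpow (zero_le_one.trans hx.1), rpow_neg (zero_le_one.trans hx.1)]
  rw [integral_comp_one_add_mul (fun x => (1 / x) ^ q) hL.ne', integral_congr hcongr,
    integral_rpow (Or.inr ⟨by contrapose! hq; linarith, by simp [uIcc_of_le h1]⟩),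
    one_rpow, neg_add_eq_sub]
  have : q - 1 ≠ 0 := sub_ne_zero.mpr hq
  have : 1 - q ≠ 0 := sub_ne_zero.mpr hq.symm
  field_simp
  ring

lemma integral_one_div_one_add_mul_rpow_le {L : ℝ} (hL : 0 < L) {b : ℝ} (hb : 0 ≤ b) {q : ℝ}
    (hq : 1 < q) :
    ∫ η in (0:ℝ)..b, (1 / (1 + η * L)) ^ q ≤ 1 / ((q - 1) * L) := by
  rw [integral_one_div_one_add_mul_rpow hL hb hq.ne']
  have : 0 < (q - 1) * L := mul_pos (sub_pos.mpr hq) hL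
  gcongr
  exact sub_le_self _ (rpow_nonneg (by positivity) _)

lemma log_one_add_two_mul_le {L : ℝ} (hL : 0 ≤ L) : log (1 + 2 * L) ≤ 2 * log (1 + L) := by
  calc log (1 + 2 * L) ≤ log ((1 + L) ^ 2) := log_le_log (by positivity) (by nlinarith)
    _ = 2 * log (1 + L) := by rw [log_pow, Nat.cast_ofNat]

theorem stmt_13 (p : ℝ) (hp : 2 ≤ p) :
    ∃ C > 0, ∀ t : ℝ, 0 ≤ t →
      (p = 2 → (∫ η in (0:ℝ)..2, (1 / (1 + η * Real.log (t + 2))) ^ (p / 2))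
          ≤ C * (Real.log (2 + t))⁻¹ * Real.log (1 + Real.log (t + 2))) ∧
      (2 < p → (∫ η in (0:ℝ)..2, (1 / (1 + η * Real.log (t + 2))) ^ (p / 2))
          ≤ C * (Real.log (2 + t))⁻¹) := by
  rcases hp.eq_or_lt with rfl | hp2
  · refine ⟨2, two_pos, fun t ht => ⟨fun _ => ?_, fun h => absurd h (lt_irrefl 2)⟩⟩
    have hL : 0 < log (t + 2) := log_pos (by linarith)
    simp only [div_self (two_ne_zero' ℝ), rpow_one, add_comm 2 t]
    rw [integral_one_div_one_add_mul hL zero_le_two]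
    calc log (1 + 2 * log (t + 2)) / log (t + 2)
        ≤ 2 * log (1 + log (t + 2)) / log (t + 2) := by
          gcongr; exact log_one_add_two_mul_le hL.le
      _ = 2 * (log (t + 2))⁻¹ * log (1 + log (t + 2)) := by ring
  · refine ⟨2 / (p - 2), div_pos two_pos (sub_pos.mpr hp2), fun t ht =>
      ⟨fun h => absurd h hp2.ne', fun _ => ?_⟩⟩
    have hL : 0 < log (t + 2) := log_pos (by linarith)
    calc _ ≤ 1 / ((p / 2 - 1) * log (t + 2)) :=
          integral_one_div_one_add_mul_rpow_le hL zero_le_two (by linarith)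
      _ = 2 / (p - 2) * (log (2 + t))⁻¹ := by
          rw [add_comm 2 t]
          field_simp
end

section
/- Let t ≥ 0, B ≥ 1, p ≥ 2, j ∈ {1,2,3}, and suppose |g(x)| ≤ C(t+2B)^{-1/2}(1 + (1-(x/(t+2B))²)^j log(t+2B))^{-1/2} for |x| ≤ t+B and g(x) = 0 for |x| > t+B. Then ∫_ℝ |g(x)|^p dx ≤ C'(1+t)^{-p/2+1} ∫₀¹ (1 + η^j log(2+t))^{-p/2} dη for a constant C' depending only on C, p, B. -/
open MeasureTheory intervalIntegral Set

set_option maxHeartbeats 1000000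

theorem stmt_19 (C : ℝ) (hC : 0 < C) (p : ℝ) (hp : 2 ≤ p) (B : ℝ) (hB : 1 ≤ B) :
    ∃ C' > 0, ∀ t : ℝ, 0 ≤ t → ∀ j : ℕ, 1 ≤ j → j ≤ 3 → ∀ g : ℝ → ℝ, Measurable g →
      (∀ x : ℝ, |x| ≤ t + B →
        |g x| ≤ C * (t + 2 * B) ^ (-(1 / 2) : ℝ) *
          (1 + (1 - (x / (t + 2 * B)) ^ 2) ^ j * Real.log (t + 2 * B)) ^ (-(1 / 2) : ℝ)) →
      (∀ x : ℝ, t + B < |x| → g x = 0) →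
      (∫ x : ℝ, |g x| ^ p) ≤
        C' * (1 + t) ^ (-(p / 2) + 1) *
          ∫ η in (0:ℝ)..1, (1 + η ^ j * Real.log (2 + t)) ^ (-(p / 2)) := by
  refine ⟨2 * C ^ p, by positivity, ?_⟩
  intro t ht j hj1 hj3 g hg hbound hzero
  have hp0 : (0:ℝ) < p := by linarith
  have hq0 : -(p / 2) ≤ 0 := by linarith
  set s : ℝ := t + 2 * B with hs_def
  set c : ℝ := t + B with hc_def
  have hs2 : (2:ℝ) ≤ s := by simp only [hs_def]; linarith
  have hs0 : (0:ℝ) < s := by linarith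
  have hc1 : (1:ℝ) ≤ c := by simp only [hc_def]; linarith
  have hc0 : (0:ℝ) < c := by linarith
  have hcs : c < s := by simp only [hs_def, hc_def]; linarith
  set L : ℝ := Real.log s with hL_def
  have hL0 : 0 ≤ L := Real.log_nonneg (by linarith)
  have hLt : Real.log (2 + t) ≤ L := Real.log_le_log (by linarith) (by linarith)
  have hlog2t : 0 ≤ Real.log (2 + t) := Real.log_nonneg (by linarith)
  set F : ℝ → ℝ := fun y => (1 + (1 - y ^ 2) ^ j * L) ^ (-(p / 2)) with hF_def
  -- base positivity on [-1,1]
  have hbase : ∀ y : ℝ, |y| ≤ 1 → (1:ℝ) ≤ 1 + (1 - y ^ 2) ^ j * L := by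
    intro y hy
    have h1 : 0 ≤ 1 - y ^ 2 := by nlinarith [abs_nonneg y, sq_abs y, abs_le.1 hy]
    nlinarith [pow_nonneg h1 j, mul_nonneg (pow_nonneg h1 j) hL0]
  have hFnonneg : ∀ y : ℝ, |y| ≤ 1 → 0 ≤ F y := fun y hy =>
    Real.rpow_nonneg (by linarith [hbase y hy]) _
  -- continuity of F on Icc (-1) 1
  have hFcont : ContinuousOn F (Icc (-1:ℝ) 1) := by
    apply ContinuousOn.rpow_const
    · fun_prop
    · intro y hy
      left
      have := hbase y (abs_le.2 ⟨hy.1, hy.2⟩)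
      linarith
  have hFint : IntervalIntegrable F volume (-1) 1 :=
    (hFcont.intervalIntegrable_of_Icc (by norm_num))
  -- the dominating function
  set K : ℝ := C ^ p * s ^ (-(p / 2)) with hK_def
  have hK0 : 0 ≤ K := by positivity
  set H : ℝ → ℝ := fun x => K * F (x / s) with hH_def
  have hxs : ∀ x : ℝ, |x| ≤ c → |x / s| ≤ 1 := by
    intro x hx
    rw [abs_div, abs_of_pos hs0, div_le_one hs0]
    linarith
  -- pointwise bound on Icc (-c) c
  have hptwise : ∀ x ∈ Icc (-c) c, |g x| ^ p ≤ H x := by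
    intro x hx
    have hxc : |x| ≤ c := abs_le.2 ⟨hx.1, hx.2⟩
    have hb := hbound x hxc
    have hA1 : (1:ℝ) ≤ 1 + (1 - (x / s) ^ 2) ^ j * L := hbase _ (hxs x hxc)
    have hA0 : (0:ℝ) ≤ 1 + (1 - (x / s) ^ 2) ^ j * L := by linarith
    calc |g x| ^ p ≤ (C * s ^ (-(1/2) : ℝ) *
          (1 + (1 - (x / s) ^ 2) ^ j * L) ^ (-(1/2) : ℝ)) ^ p :=
          Real.rpow_le_rpow (abs_nonneg _) hb hp0.le
      _ = C ^ p * (s ^ (-(1/2) : ℝ)) ^ p *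
          ((1 + (1 - (x / s) ^ 2) ^ j * L) ^ (-(1/2) : ℝ)) ^ p := by
          rw [Real.mul_rpow (by positivity) (Real.rpow_nonneg hA0 _),
            Real.mul_rpow hC.le (Real.rpow_nonneg hs0.le _)]
      _ = H x := by
          rw [← Real.rpow_mul hs0.le, ← Real.rpow_mul hA0]
          have he : -(1/2) * p = -(p/2) := by ring
          rw [he]
  -- reduce to the set integral
  have hred : (∫ x : ℝ, |g x| ^ p) = ∫ x in Icc (-c) c, |g x| ^ p := by
    refine (setIntegral_eq_integral_of_forall_compl_eq_zero ?_).symm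
    intro x hx
    have hxc : c < |x| := not_le.1 fun h => hx (Set.mem_Icc.2 (abs_le.1 h))
    rw [hzero x hxc, abs_zero, Real.zero_rpow (by linarith)]
  -- integrability of H on Icc (-c) c
  have hHcont : ContinuousOn H (Icc (-c) c) := by
    apply ContinuousOn.mul continuousOn_const
    apply ContinuousOn.rpow_const
    · fun_prop
    · intro x hx
      left
      have := hbase (x / s) (hxs x (abs_le.2 ⟨hx.1, hx.2⟩))
      linarith
  have hHint : IntegrableOn H (Icc (-c) c) := hHcont.integrableOn_Icc
  have hgmeas : Measurable fun x => |g x| ^ p := by fun_prop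
  have hgint : IntegrableOn (fun x => |g x| ^ p) (Icc (-c) c) := by
    refine Integrable.mono' hHint (hgmeas.aestronglyMeasurable.restrict) ?_
    refine ae_restrict_of_forall_mem measurableSet_Icc ?_
    intro x hx
    rw [Real.norm_eq_abs, abs_of_nonneg (Real.rpow_nonneg (abs_nonneg _) _)]
    exact hptwise x hx
  -- main comparison chain
  set I : ℝ := ∫ η in (0:ℝ)..1, (1 + η ^ j * Real.log (2 + t)) ^ (-(p / 2)) with hI_def
  have hI0 : 0 ≤ I := by
    apply intervalIntegral.integral_nonneg (by norm_num)
    intro u hu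
    have : (0:ℝ) ≤ 1 + u ^ j * Real.log (2 + t) := by
      have := pow_nonneg hu.1 j
      nlinarith
    exact Real.rpow_nonneg this _
  -- step: ∫ x in Icc, H = K * s * ∫ y in (-c/s)..(c/s), F y
  have hcs' : -c / s = -(c / s) := by ring
  have hchange : (∫ x in Icc (-c) c, H x) = K * (s * ∫ y in (-c/s)..(c/s), F y) := by
    rw [integral_Icc_eq_integral_Ioc, ← intervalIntegral.integral_of_le (by linarith : -c ≤ c)]
    have h1 : (∫ x in (-c)..c, H x) = K * ∫ x in (-c)..c, F (x / s) := by
      simp only [hH_def]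
      rw [intervalIntegral.integral_const_mul]
    rw [h1]
    congr 1
    have h2 := intervalIntegral.inv_mul_integral_comp_div (f := F) (c := s) (a := -c) (b := c)
    have h3 : (∫ x in (-c)..c, F (x / s)) = s * ((s⁻¹) * ∫ x in (-c)..c, F (x / s)) := by
      field_simp
    rw [h3, h2, hcs']
  -- step: ∫ y in -(c/s)..(c/s), F ≤ ∫ y in (-1)..1, F
  have hmono1 : (∫ y in (-(c/s))..(c/s), F y) ≤ ∫ y in (-1:ℝ)..1, F y := by
    have hcs1 : c / s ≤ 1 := (div_le_one hs0).2 hcs.le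
    apply intervalIntegral.integral_mono_interval (by linarith) (by linarith [div_nonneg hc0.le hs0.le]) hcs1
    · refine ae_restrict_of_forall_mem measurableSet_Ioc ?_
      intro y hy
      exact hFnonneg y (abs_le.2 ⟨hy.1.le, hy.2⟩)
    · exact hFint
  -- step: ∫ (-1)..1 F = 2 * ∫ 0..1 F
  have hFint01 : IntervalIntegrable F volume 0 1 :=
    hFint.mono_set (by rw [uIcc_of_le (by norm_num : (-1:ℝ) ≤ 1), uIcc_of_le (by norm_num : (0:ℝ) ≤ 1)]; exact Icc_subset_Icc (by norm_num) le_rfl)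
  have hFintm10 : IntervalIntegrable F volume (-1) 0 :=
    hFint.mono_set (by rw [uIcc_of_le (by norm_num : (-1:ℝ) ≤ 1), uIcc_of_le (by norm_num : (-1:ℝ) ≤ 0)]; exact Icc_subset_Icc le_rfl (by norm_num))
  have hsym : (∫ y in (-1:ℝ)..1, F y) = 2 * ∫ y in (0:ℝ)..1, F y := by
    have hsplit := intervalIntegral.integral_add_adjacent_intervals hFintm10 hFint01
    have heven : (∫ y in (-1:ℝ)..0, F y) = ∫ y in (0:ℝ)..1, F y := by
      have h := intervalIntegral.integral_comp_neg (a := (0:ℝ)) (b := 1) (f := F)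
      have hFe : (fun y => F (-y)) = F := by
        funext y; simp only [hF_def, neg_sq]
      rw [hFe, neg_zero] at h
      exact h.symm
    linarith
  -- step: ∫ 0..1 F ≤ ∫ 0..1 G  with G y = (1 + (1-y)^j L)^(-(p/2))
  set G : ℝ → ℝ := fun y => (1 + (1 - y) ^ j * L) ^ (-(p / 2)) with hG_def
  have hGbase : ∀ y ∈ Icc (0:ℝ) 1, (1:ℝ) ≤ 1 + (1 - y) ^ j * L := by
    intro y hy
    have h1 : 0 ≤ 1 - y := by linarith [hy.2]
    nlinarith [pow_nonneg h1 j, mul_nonneg (pow_nonneg h1 j) hL0]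
  have hGcont : ContinuousOn G (Icc (0:ℝ) 1) := by
    apply ContinuousOn.rpow_const
    · fun_prop
    · intro y hy; left; linarith [hGbase y hy]
  have hGint : IntervalIntegrable G volume 0 1 :=
    hGcont.intervalIntegrable_of_Icc (by norm_num)
  have hmono2 : (∫ y in (0:ℝ)..1, F y) ≤ ∫ y in (0:ℝ)..1, G y := by
    apply intervalIntegral.integral_mono_on (by norm_num) hFint01 hGint
    intro y hy
    have h1 : 0 ≤ 1 - y := by linarith [hy.2]
    have h2 : 1 - y ≤ 1 - y ^ 2 := by nlinarith [hy.1, hy.2]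
    have h3 : (1 - y) ^ j ≤ (1 - y ^ 2) ^ j := pow_le_pow_left₀ h1 h2 j
    have h4 : 1 + (1 - y) ^ j * L ≤ 1 + (1 - y ^ 2) ^ j * L := by
      nlinarith [mul_le_mul_of_nonneg_right h3 hL0]
    exact Real.rpow_le_rpow_of_nonpos (by linarith [hGbase y hy]) h4 hq0
  -- step: ∫ 0..1 G = ∫ 0..1 (1 + η^j L)^(-(p/2))
  have hGsub : (∫ y in (0:ℝ)..1, G y) = ∫ η in (0:ℝ)..1, (1 + η ^ j * L) ^ (-(p / 2)) := by
    have h := intervalIntegral.integral_comp_sub_left (a := (0:ℝ)) (b := 1)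
      (f := fun η => (1 + η ^ j * L) ^ (-(p / 2))) 1
    simp only [sub_self, sub_zero] at h
    exact h
  -- step: replace L by log(2+t)
  have hmono3 : (∫ η in (0:ℝ)..1, (1 + η ^ j * L) ^ (-(p / 2))) ≤ I := by
    have hcont1 : ContinuousOn (fun η : ℝ => (1 + η ^ j * L) ^ (-(p / 2))) (Icc (0:ℝ) 1) := by
      apply ContinuousOn.rpow_const
      · fun_prop
      · intro y hy; left
        have := mul_nonneg (pow_nonneg hy.1 j) hL0
        nlinarith
    have hcont2 : ContinuousOn (fun η : ℝ => (1 + η ^ j * Real.log (2 + t)) ^ (-(p / 2)))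
        (Icc (0:ℝ) 1) := by
      apply ContinuousOn.rpow_const
      · fun_prop
      · intro y hy; left
        have := mul_nonneg (pow_nonneg hy.1 j) hlog2t
        nlinarith
    apply intervalIntegral.integral_mono_on (by norm_num)
      (hcont1.intervalIntegrable_of_Icc (by norm_num))
      (hcont2.intervalIntegrable_of_Icc (by norm_num))
    intro y hy
    have h1 : 0 ≤ y ^ j := pow_nonneg hy.1 j
    have h2 : 1 + y ^ j * Real.log (2 + t) ≤ 1 + y ^ j * L := by nlinarith
    have h3 : (0:ℝ) < 1 + y ^ j * Real.log (2 + t) := by nlinarith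
    exact Real.rpow_le_rpow_of_nonpos h3 h2 hq0
  -- combine
  have hstep : (∫ x : ℝ, |g x| ^ p) ≤ K * (s * (2 * I)) := by
    rw [hred]
    calc (∫ x in Icc (-c) c, |g x| ^ p) ≤ ∫ x in Icc (-c) c, H x :=
          setIntegral_mono_on hgint hHint measurableSet_Icc hptwise
      _ = K * (s * ∫ y in (-c/s)..(c/s), F y) := hchange
      _ ≤ K * (s * (2 * I)) := by
          apply mul_le_mul_of_nonneg_left _ hK0
          apply mul_le_mul_of_nonneg_left _ hs0.le
          have := hcs' ▸ hmono1
          calc (∫ y in (-c/s)..(c/s), F y) ≤ ∫ y in (-1:ℝ)..1, F y := by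
                rw [hcs']; exact hmono1
            _ = 2 * ∫ y in (0:ℝ)..1, F y := hsym
            _ ≤ 2 * I := by
                have := hmono2.trans (hGsub ▸ hmono3)
                linarith
  refine hstep.trans ?_
  have hrw : K * (s * (2 * I)) = 2 * C ^ p * (s ^ (-(p/2)) * s) * I := by
    rw [hK_def]; ring
  rw [hrw]
  have hss : s ^ (-(p/2)) * s = s ^ (-(p/2) + 1) := by
    rw [Real.rpow_add hs0, Real.rpow_one]
  rw [hss]
  have hexp : s ^ (-(p/2) + 1) ≤ (1 + t) ^ (-(p/2) + 1) := by
    apply Real.rpow_le_rpow_of_nonpos (by linarith) (by simp only [hs_def]; linarith)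
    linarith
  have h2C : (0:ℝ) ≤ 2 * C ^ p := by positivity
  calc 2 * C ^ p * s ^ (-(p/2) + 1) * I ≤ 2 * C ^ p * (1 + t) ^ (-(p/2) + 1) * I := by
        apply mul_le_mul_of_nonneg_right _ hI0
        exact mul_le_mul_of_nonneg_left hexp h2C
    _ = 2 * C ^ p * (1 + t) ^ (-(p / 2) + 1) * I := rfl
end
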